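/- Let L be an invertible module over a commutative ring A and u : L → A an A-linear map. Then for all x, y ∈ L one has u(x)·y = u(y)·x. -/

import Mathlib

/-!
Equality of two elements of `L` can be tested after localizing at every maximal ideal `P`.
There `L_P` is finite projective over the local ring `A_P`, hence free, and its rank is the
dimension of the fibre of `L` at `P`, which the hypothesis computes over
`Frac (A ⧸ P) ≅ κ(P)`. So `L_P ≅ A_P`, where the identity is the commutativity of `A_P`.
-/

open TensorProduct Module

theorem LinearMap.apply_smul_comm_of_finrank_eq_one {R N : Type*} [CommRing R] [Nontrivial R]
    [AddCommGroup N] [Module R N] [Free R N] [Module.Finite R N] (h : finrank R N = 1)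
    (v : N →ₗ[R] R) (a b : N) : v a • b = v b • a := by
  let e : N ≃ₗ[R] R := .ofFinrankEq N R (by rw [h, finrank_self])
  have coord (c : N) : c = e c • e.symm 1 := by
    rw [← map_smul, smul_eq_mul, mul_one, e.symm_apply_apply]
  rw [coord a, coord b]
  simp only [map_smul, smul_smul, smul_eq_mul]
  ring_nf

theorem IsLocalizedModule.apply_smul_comm {A Aₛ L Lₛ : Type*} [CommRing A] [CommRing Aₛ]
    [Algebra A Aₛ] [AddCommGroup L] [Module A L] [AddCommGroup Lₛ] [Module A Lₛ] [Module Aₛ Lₛ]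
    [IsScalarTower A Aₛ Lₛ] (S : Submonoid A) [IsLocalization S Aₛ] (f : L →ₗ[A] Lₛ)
    [IsLocalizedModule S f] (h : ∀ (v : Lₛ →ₗ[Aₛ] Aₛ) (a b : Lₛ), v a • b = v b • a)
    (u : L →ₗ[A] A) (x y : L) : f (u x • y) = f (u y • x) := by
  let v := mapExtendScalars S f (Algebra.linearMap A Aₛ) Aₛ u
  have hv (z : L) : v (f z) = algebraMap A Aₛ (u z) := map_apply S f _ u z
  simpa only [map_smul, hv, algebraMap_smul] using h v (f x) (f y)

namespace Module

variable {A L : Type*} [CommRing A] [AddCommGroup L] [Module A L]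

theorem finrank_baseChange_eq_of_isScalarTower {K K' : Type*} [CommRing K] [CommRing K']
    [StrongRankCondition K] [StrongRankCondition K'] [Algebra A K] [Algebra K K'] [Algebra A K']
    [IsScalarTower A K K'] [Free K (K ⊗[A] L)] :
    finrank K' (K' ⊗[A] L) = finrank K (K ⊗[A] L) := by
  rw [← (AlgebraTensorModule.cancelBaseChange A K K' K' L).finrank_eq, finrank_baseChange]

theorem finrank_baseChange_congr {K K' : Type*} [Field K] [Field K'] [Algebra A K]
    [Algebra A K'] (e : K ≃ₐ[A] K') : finrank K' (K' ⊗[A] L) = finrank K (K ⊗[A] L) := by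
  let := e.toRingHom.toAlgebra
  have : IsScalarTower A K K' := .of_algebraMap_eq fun a ↦ (e.commutes a).symm
  exact finrank_baseChange_eq_of_isScalarTower

theorem rankAtStalk_eq_finrank_fractionRing [Flat A L] [Module.Finite A L] (P : Ideal A)
    [hP : P.IsPrime] :
    rankAtStalk L ⟨P, hP⟩ = finrank (FractionRing (A ⧸ P)) (FractionRing (A ⧸ P) ⊗[A] L) := by
  rw [rankAtStalk_eq, ← finrank_baseChange_congr
    ((FractionRing.algEquiv (A ⧸ P) P.ResidueField).restrictScalars A)]

end Module

theorem stmt_16 (A : Type*) [CommRing A] (L : Type*) [AddCommGroup L] [Module A L]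
    [Module.Finite A L] [Module.Projective A L]
    (hrank : ∀ (p : Ideal A), p.IsPrime →
      Module.finrank (FractionRing (A ⧸ p)) ((FractionRing (A ⧸ p)) ⊗[A] L) = 1)
    (u : L →ₗ[A] A) (x y : L) :
    u x • y = u y • x := by
  refine Module.eq_of_localization_maximal (fun (P : Ideal A) _ ↦ LocalizedModule P.primeCompl L)
    (fun P _ ↦ LocalizedModule.mkLinearMap P.primeCompl L) _ _ fun P hP ↦ ?_
  have : Free (Localization.AtPrime P) (LocalizedModule P.primeCompl L) :=
    free_of_flat_of_isLocalRing
  have hrankP : finrank (Localization.AtPrime P) (LocalizedModule P.primeCompl L) = 1 :=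
    (rankAtStalk_eq_finrank_fractionRing P).trans (hrank P hP.isPrime)
  exact IsLocalizedModule.apply_smul_comm P.primeCompl _
    (LinearMap.apply_smul_comm_of_finrank_eq_one hrankP) u x y
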